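/- arXiv:2308.07719 — 3 statements merged into one kernel-verified Lean document; each statement's English description precedes it below -/
import Mathlib

section
/- Let E : L(H_A) → L(H_M) be a coherence–non-creating channel that maps an S-dimensional subspace V ⊆ H_A exactly to |Ψ_M⟩⟨Ψ_M|, where |Ψ_M⟩ = M^{-1/2} Σ_{m=1}^M |m⟩ and dim H_A = A = S·M, and suppose the image of E is supported on the span of {|m⟩ : m ∈ [M]}. Then the target effect satisfies T = E†(|Ψ_M⟩⟨Ψ_M|) = P_V, the projection onto V. -/
open Matrix BigOperators ComplexOrder

/-- A linear map on matrices is completely positive iff it admits a Kraus decomposition. -/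
def IsCompletelyPositive {A M : ℕ}
    (E : Matrix (Fin A) (Fin A) ℂ →ₗ[ℂ] Matrix (Fin M) (Fin M) ℂ) : Prop :=
  ∃ (ι : Type) (_ : Fintype ι) (K : ι → Matrix (Fin M) (Fin A) ℂ),
    ∀ X, E X = ∑ c, K c * X * (K c)ᴴ

/-- Dephasing map: keeps only the diagonal part of a matrix. -/
def dephase {n : ℕ} (X : Matrix (Fin n) (Fin n) ℂ) : Matrix (Fin n) (Fin n) ℂ :=
  Matrix.diagonal (fun i => X i i)

lemma trace_vmv_mul {n : ℕ} (x : Fin n → ℂ) (T : Matrix (Fin n) (Fin n) ℂ) :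
    (Matrix.vecMulVec x (star x) * T).trace = star x ⬝ᵥ T.mulVec x := by
  simp only [Matrix.trace, Matrix.diag, Matrix.mul_apply, Matrix.vecMulVec_apply,
    dotProduct, Matrix.mulVec, Pi.star_apply]
  rw [Finset.sum_comm]
  simp [Finset.mul_sum]
  congr 1; ext j; congr 1; ext i; ring

lemma psd_trace_nonneg {n : ℕ} {R : Matrix (Fin n) (Fin n) ℂ} (h : R.PosSemidef) :
    0 ≤ R.trace := by
  apply Finset.sum_nonneg
  intro i _
  have := h.dotProduct_mulVec_nonneg (Pi.single i 1)
  simpa [dotProduct, Matrix.mulVec, Pi.single_apply] using this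

lemma psd_eq_zero_of_trace_eq_zero {n : ℕ} {R : Matrix (Fin n) (Fin n) ℂ}
    (h : R.PosSemidef) (h0 : R.trace = 0) : R = 0 := by
  have hdiag : ∀ i, R i i = 0 := by
    have hnn : ∀ i ∈ Finset.univ, (0:ℂ) ≤ R i i := by
      intro i _
      have := h.dotProduct_mulVec_nonneg (Pi.single i 1)
      simpa [dotProduct, Matrix.mulVec, Pi.single_apply] using this
    intro i
    exact (Finset.sum_eq_zero_iff_of_nonneg hnn).mp h0 i (Finset.mem_univ i)
  ext i j
  have hq : star (Pi.single j 1 : Fin n → ℂ) ⬝ᵥ R *ᵥ Pi.single j 1 = 0 := by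
    simpa [dotProduct, Matrix.mulVec, Pi.single_apply] using hdiag j
  have := (h.dotProduct_mulVec_zero_iff (Pi.single j 1)).mp hq
  have h2 := congrFun this i
  simpa [Matrix.mulVec, dotProduct, Pi.single_apply] using h2

lemma eq_of_mulVec_eq {n : ℕ} {A B : Matrix (Fin n) (Fin n) ℂ}
    (h : ∀ x, A.mulVec x = B.mulVec x) : A = B := by
  ext i j
  have := congrFun (h (Pi.single j 1)) i
  simpa [Matrix.mulVec, dotProduct, Pi.single_apply] using this

lemma psd_sum {n : ℕ} {ι : Type} [Fintype ι] (f : ι → Matrix (Fin n) (Fin n) ℂ)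
    (h : ∀ c, (f c).PosSemidef) : (∑ c, f c).PosSemidef := by
  exact Finset.sum_induction f (fun M => M.PosSemidef)
    (fun a b ha hb => ha.add hb) Matrix.PosSemidef.zero (fun c _ => h c)

lemma trace_std_mul {n : ℕ} (i j : Fin n) (T : Matrix (Fin n) (Fin n) ℂ) :
    (Matrix.single j i 1 * T).trace = T i j := by
  simp [Matrix.trace, Matrix.diag, Matrix.mul_apply, Matrix.single, ite_and]

lemma trace_mulVecLin {n : ℕ} (P : Matrix (Fin n) (Fin n) ℂ) :
    LinearMap.trace ℂ (Fin n → ℂ) (Matrix.mulVecLin P) = P.trace := by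
  rw [LinearMap.trace_eq_matrix_trace ℂ (Pi.basisFun ℂ (Fin n))]
  rw [LinearMap.toMatrix_eq_toMatrix']
  congr 1
  ext i j
  simp [LinearMap.toMatrix', Matrix.mulVec, dotProduct, Pi.single_apply]

/-- if a coherence–non-creating (MIO) channel maps an `S`-dimensional
subspace `V ⊆ ℂ^A` exactly to the maximally coherent state `Ψ_M`, with
`A = S * M` (and the output Hilbert space being exactly the span of the `|m⟩`),
then the target effect equals the projection onto `V`: `T = P_V`. -/
theorem maximal_distillation_target_effect {A M S : ℕ}
    (hM : 0 < M) (hAS : A = S * M)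
    (E : Matrix (Fin A) (Fin A) ℂ →ₗ[ℂ] Matrix (Fin M) (Fin M) ℂ)
    (hCP : IsCompletelyPositive E)
    (hTP : ∀ X : Matrix (Fin A) (Fin A) ℂ, (E X).trace = X.trace)
    (hMIO : ∀ a : Fin A,
      E (Matrix.single a a 1) = dephase (E (Matrix.single a a 1)))
    (V : Submodule ℂ (Fin A → ℂ)) (hdim : Module.finrank ℂ V = S)
    (P : Matrix (Fin A) (Fin A) ℂ)
    (hPH : P.IsHermitian) (hPP : P * P = P)
    (hPV : ∀ v : Fin A → ℂ, v ∈ V ↔ P.mulVec v = v)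
    -- the maximally coherent state `|Ψ_M⟩ = M^{-1/2} ∑ m |m⟩`
    (Ψ : Fin M → ℂ) (hΨ : ∀ m, Ψ m = ((Real.sqrt M : ℂ))⁻¹)
    (hV : ∀ v : Fin A → ℂ, v ∈ V →
      E (Matrix.vecMulVec v (star v)) =
        (∑ a, star (v a) * v a) • Matrix.vecMulVec Ψ (star Ψ))
    (T : Matrix (Fin A) (Fin A) ℂ)
    (hT : ∀ X : Matrix (Fin A) (Fin A) ℂ,
      (X * T).trace = (E X * Matrix.vecMulVec Ψ (star Ψ)).trace) :
    T = P := by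
  simp only [dephase] at hMIO
  obtain ⟨ι, hι, K, hK⟩ := hCP
  set W := Matrix.vecMulVec Ψ (star Ψ) with hWdef
  -- basic facts about Ψ
  have hMne : (M : ℂ) ≠ 0 := Nat.cast_ne_zero.mpr hM.ne'
  have hΨsq : ∀ m, Ψ m * star (Ψ m) = (M : ℂ)⁻¹ := by
    intro m
    rw [hΨ m]
    have h1 : star (((Real.sqrt M : ℂ))⁻¹) = ((Real.sqrt M : ℂ))⁻¹ := by
      rw [star_inv₀]; congr 1; exact Complex.conj_ofReal _
    rw [h1, ← mul_inv, ← Complex.ofReal_mul, Real.mul_self_sqrt (Nat.cast_nonneg M),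
      Complex.ofReal_natCast]
  have hΨnorm : (∑ m, star (Ψ m) * Ψ m) = 1 := by
    have hterm : ∀ m, star (Ψ m) * Ψ m = (M : ℂ)⁻¹ := fun m => by rw [mul_comm]; exact hΨsq m
    rw [Finset.sum_congr rfl (fun m _ => hterm m)]
    simp only [Finset.sum_const, Finset.card_univ, Fintype.card_fin, nsmul_eq_mul]
    exact mul_inv_cancel₀ hMne
  -- W is a Hermitian projection
  have hWH : Wᴴ = W := by
    ext i j
    simp [hWdef, Matrix.vecMulVec_apply, mul_comm]
  have hWW : W * W = W := by
    ext i j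
    simp only [hWdef, Matrix.mul_apply, Matrix.vecMulVec_apply, Pi.star_apply]
    rw [show (∑ k, Ψ i * star (Ψ k) * (Ψ k * star (Ψ j)))
        = (Ψ i * star (Ψ j)) * ∑ k, star (Ψ k) * Ψ k by rw [Finset.mul_sum]; congr 1; ext k; ring]
    rw [hΨnorm, mul_one]
  have htrW : W.trace = 1 := by
    simp only [hWdef, Matrix.trace, Matrix.diag, Matrix.vecMulVec_apply, Pi.star_apply]
    rw [← hΨnorm]
    congr 1; ext m; rw [mul_comm]
  -- E commutes with conjTranspose
  have hEadj : ∀ X : Matrix (Fin A) (Fin A) ℂ, (E X)ᴴ = E Xᴴ := by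
    intro X
    rw [hK, hK]
    rw [Matrix.conjTranspose_sum]
    apply Finset.sum_congr rfl
    intro c _
    rw [Matrix.conjTranspose_mul, Matrix.conjTranspose_mul,
      Matrix.conjTranspose_conjTranspose, ← Matrix.mul_assoc]
  -- E preserves positive semidefiniteness
  have hEpsd : ∀ X : Matrix (Fin A) (Fin A) ℂ, X.PosSemidef → (E X).PosSemidef := by
    intro X hX
    rw [hK]
    exact psd_sum _ (fun c => hX.mul_mul_conjTranspose_same (K c))
  -- xx* is PSD
  have hvmv : ∀ x : Fin A → ℂ, (Matrix.vecMulVec x (star x)).PosSemidef := by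
    intro x
    refine Matrix.PosSemidef.of_dotProduct_mulVec_nonneg ?_ ?_
    · ext i j; simp [Matrix.vecMulVec_apply, mul_comm]
    · intro y
      have : star y ⬝ᵥ (Matrix.vecMulVec x (star x)) *ᵥ y
          = star (star x ⬝ᵥ y) * (star x ⬝ᵥ y) := by
        simp only [dotProduct, Matrix.mulVec, Matrix.vecMulVec_apply, Pi.star_apply,
          star_sum, star_mul', star_star, Finset.mul_sum, Finset.sum_mul]
        rw [Finset.sum_comm]
        congr 1; ext i; congr 1; ext j; ring
      rw [this]
      exact star_mul_self_nonneg _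
  -- trace of ρ * G ≥ 0 for ρ PSD and G a Hermitian projection
  have htrG : ∀ (ρ G : Matrix (Fin M) (Fin M) ℂ), ρ.PosSemidef → Gᴴ = G → G * G = G →
      0 ≤ (ρ * G).trace := by
    intro ρ G hρ hGH hGG
    have h1 : (ρ * G).trace = (Gᴴ * ρ * G).trace := by
      conv_lhs => rw [← hGG]
      rw [← Matrix.mul_assoc, Matrix.trace_mul_comm (ρ * G) G, hGH, ← Matrix.mul_assoc]
    rw [h1]
    exact psd_trace_nonneg (hρ.conjTranspose_mul_mul_same G)
  -- entries of T
  have hTentry : ∀ i j, T i j = (E (Matrix.single j i 1) * W).trace := by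
    intro i j
    rw [← hT, trace_std_mul]
  -- T is Hermitian
  have hTH : T.IsHermitian := by
    ext i j
    rw [Matrix.conjTranspose_apply, hTentry j i, hTentry i j]
    have hstd : (Matrix.single i j (1:ℂ))ᴴ = Matrix.single j i 1 := by
      ext a b
      simp [Matrix.single, Matrix.conjTranspose_apply, and_comm]
    rw [← Matrix.trace_conjTranspose, Matrix.conjTranspose_mul, hWH, hEadj, hstd,
      Matrix.trace_mul_comm]
  -- quadratic form of T
  have hquadT : ∀ x : Fin A → ℂ, star x ⬝ᵥ T *ᵥ x = (E (Matrix.vecMulVec x (star x)) * W).trace := by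
    intro x
    rw [← trace_vmv_mul, hT]
  -- T is PSD
  have hTpsd : T.PosSemidef := by
    refine Matrix.PosSemidef.of_dotProduct_mulVec_nonneg hTH (fun x => ?_)
    rw [hquadT]
    exact htrG _ _ (hEpsd _ (hvmv x)) hWH hWW
  -- 1 - T is PSD
  have h1T : (1 - T).PosSemidef := by
    refine Matrix.PosSemidef.of_dotProduct_mulVec_nonneg ?_ ?_
    · exact Matrix.isHermitian_one.sub hTH
    · intro x
      rw [Matrix.sub_mulVec, dotProduct_sub, Matrix.one_mulVec, hquadT]
      have hρ := hEpsd _ (hvmv x)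
      have htr : (E (Matrix.vecMulVec x (star x))).trace = star x ⬝ᵥ x := by
        rw [hTP]
        simp only [Matrix.trace, Matrix.diag, Matrix.vecMulVec_apply, dotProduct, Pi.star_apply]
        congr 1; ext a; ring
      have key : star x ⬝ᵥ x - (E (Matrix.vecMulVec x (star x)) * W).trace
          = (E (Matrix.vecMulVec x (star x)) * (1 - W)).trace := by
        rw [Matrix.mul_sub, Matrix.trace_sub, Matrix.mul_one, htr]
      rw [key]
      apply htrG _ _ hρ
      · rw [Matrix.conjTranspose_sub, hWH, Matrix.conjTranspose_one]
      · rw [Matrix.sub_mul, Matrix.mul_sub, Matrix.mul_sub, hWW]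
        simp
  -- T acts as identity on V
  have hTv : ∀ v ∈ V, T *ᵥ v = v := by
    intro v hv
    have hquad0 : star v ⬝ᵥ (1 - T) *ᵥ v = 0 := by
      rw [Matrix.sub_mulVec, dotProduct_sub, Matrix.one_mulVec, hquadT, hV v hv]
      rw [Matrix.smul_mul, Matrix.trace_smul, hWW, htrW, smul_eq_mul, mul_one]
      simp [dotProduct]
    have := (h1T.dotProduct_mulVec_zero_iff v).mp hquad0
    rw [Matrix.sub_mulVec, Matrix.one_mulVec, sub_eq_zero] at this
    exact this.symm
  -- T * P = P and P * T = P
  have hTPmat : T * P = P := by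
    apply eq_of_mulVec_eq
    intro x
    rw [← Matrix.mulVec_mulVec]
    apply hTv
    rw [hPV]
    rw [Matrix.mulVec_mulVec, hPP]
  have hPTmat : P * T = P := by
    have := congrArg Matrix.conjTranspose hTPmat
    rwa [Matrix.conjTranspose_mul, hTH.eq, hPH.eq] at this
  -- R := T - P is PSD
  have hRpsd : (T - P).PosSemidef := by
    have hfact : (1 - P) * T * (1 - P) = T - P := by
      have h1 : (1 - P) * T = T - P := by rw [Matrix.sub_mul, Matrix.one_mul, hPTmat]
      rw [h1, Matrix.mul_sub, Matrix.mul_one, Matrix.sub_mul, hTPmat, hPP, sub_self, sub_zero]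
    have h1PH : (1 - P)ᴴ = 1 - P := by
      rw [Matrix.conjTranspose_sub, hPH.eq, Matrix.conjTranspose_one]
    rw [← hfact]
    have hps := hTpsd.conjTranspose_mul_mul_same (1 - P)
    rwa [h1PH] at hps
  -- trace of T equals S
  have htrT : T.trace = (S : ℂ) := by
    have hentry : ∀ a : Fin A, T a a = (M : ℂ)⁻¹ := by
      intro a
      rw [hTentry a a, hMIO a]
      have htrEa : (E (Matrix.single a a 1)).trace = 1 := by
        rw [hTP]
        simp [Matrix.trace, Matrix.diag, Matrix.single]
      calc (Matrix.diagonal (fun i => E (Matrix.single a a 1) i i) * W).trace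
          = ∑ m, E (Matrix.single a a 1) m m * (Ψ m * star (Ψ m)) := by
            simp [Matrix.trace, Matrix.diag, Matrix.mul_apply, Matrix.diagonal_apply,
              hWdef, Matrix.vecMulVec_apply]
        _ = (∑ m, E (Matrix.single a a 1) m m) * (M : ℂ)⁻¹ := by
            rw [Finset.sum_mul]; congr 1; ext m; rw [hΨsq m]
        _ = (M : ℂ)⁻¹ := by
            rw [show (∑ m, E (Matrix.single a a 1) m m)
                = (E (Matrix.single a a 1)).trace from rfl, htrEa, one_mul]
    rw [show T.trace = ∑ a, T a a from rfl]
    simp only [hentry, Finset.sum_const, Finset.card_univ, Fintype.card_fin, nsmul_eq_mul]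
    rw [hAS]
    push_cast
    field_simp
  -- trace of P equals S
  have htrP : P.trace = (S : ℂ) := by
    have hproj : LinearMap.IsProj V P.mulVecLin := by
      constructor
      · intro x
        rw [hPV]
        rw [Matrix.mulVecLin_apply, Matrix.mulVec_mulVec, hPP]
      · intro x hx
        rw [Matrix.mulVecLin_apply]
        exact (hPV x).mp hx
    have := hproj.trace
    rw [trace_mulVecLin, hdim] at this
    exact this
  -- conclude: T - P is PSD with zero trace
  have : T - P = 0 := by
    apply psd_eq_zero_of_trace_eq_zero hRpsd
    rw [Matrix.trace_sub, htrT, htrP, sub_self]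
  exact sub_eq_zero.mp this
end

section
/- Let E be an MIO channel with Kraus operators K_c = Σ_m |m⟩⟨w_{c,m}| that maps a subspace V exactly to |Ψ_M⟩⟨Ψ_M|, and suppose the target effect satisfies T = P_V. If additionally each K_c is an incoherent (IO) Kraus operator, then the norms t_{c,m} := ⟨w_{c,m}|w_{c,m}⟩ are independent of m: t_{c,m} = t_c for all m, where t_c := M^{-1} Σ_m t_{c,m}. -/
open Matrix BigOperators ComplexOrder

lemma aux_sum_sq_zero {ι : Type*} [Fintype ι] (f : ι → ℂ)
    (h : ∑ i, star (f i) * f i = 0) : ∀ i, f i = 0 := by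
  have h' : ∑ i, (Complex.normSq (f i) : ℝ) = 0 := by
    have := congrArg Complex.re h
    simpa [Complex.mul_conj', Complex.mul_conj, Complex.normSq_apply] using this
  intro i
  have := (Finset.sum_eq_zero_iff_of_nonneg
    (fun i _ => Complex.normSq_nonneg (f i))).mp h' i (Finset.mem_univ i)
  exact Complex.normSq_eq_zero.mp this

lemma aux_qf {n : Type*} [Fintype n] (u y : n → ℂ) :
    star y ⬝ᵥ (vecMulVec u (star u)).mulVec y
      = star (star u ⬝ᵥ y) * (star u ⬝ᵥ y) := by
  simp only [dotProduct, Matrix.mulVec, vecMulVec_apply, Pi.star_apply, dotProduct,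
    Finset.mul_sum, Finset.sum_mul, star_sum, star_mul', star_star]
  rw [Finset.sum_comm]
  apply Finset.sum_congr rfl; intro j _
  apply Finset.sum_congr rfl; intro i _
  ring

lemma aux_sand {m n : Type*} [Fintype m] [Fintype n] (K : Matrix m n ℂ) (v : n → ℂ) :
    K * vecMulVec v (star v) * Kᴴ = vecMulVec (K.mulVec v) (star (K.mulVec v)) := by
  ext i j
  simp only [Matrix.mul_apply, vecMulVec_apply, Pi.star_apply, Matrix.mulVec, dotProduct,
    conjTranspose_apply, star_sum, star_mul', star_star, Finset.sum_mul, Finset.mul_sum]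
  apply Finset.sum_congr rfl; intro a _
  apply Finset.sum_congr rfl; intro b _
  ring

lemma aux_sum_mulVec {ι m n : Type*} [Fintype ι] [Fintype m] [Fintype n]
    (Q : ι → Matrix m n ℂ) (y : n → ℂ) :
    (∑ c, Q c).mulVec y = ∑ c, (Q c).mulVec y := by
  ext j
  simp only [Matrix.mulVec, dotProduct, Matrix.sum_apply, Finset.sum_apply, Finset.sum_mul]
  exact Finset.sum_comm

lemma aux_dot_sum {ι n : Type*} [Fintype ι] [Fintype n] (u : n → ℂ) (v : ι → n → ℂ) :
    u ⬝ᵥ (∑ c, v c) = ∑ c, u ⬝ᵥ v c := by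
  simp only [dotProduct, Finset.sum_apply, Finset.mul_sum]
  exact Finset.sum_comm

lemma aux_qf_sum {ι m : Type*} [Fintype ι] [Fintype m] (Q : ι → Matrix m m ℂ) (y : m → ℂ) :
    star y ⬝ᵥ (∑ c, Q c).mulVec y = ∑ c, star y ⬝ᵥ (Q c).mulVec y := by
  rw [aux_sum_mulVec, aux_dot_sum]

/-- for an MIO channel with Kraus operators `K c = ∑_m |m⟩⟨w_{c,m}|`
that maps a subspace `V` exactly to `Ψ_M` and whose target effect equals `P_V`,
if the Kraus operators are moreover incoherent (IO), then the row norms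
`t_{c,m} = ⟨w_{c,m}|w_{c,m}⟩` are independent of `m`: `t_{c,m} = t_c` where
`t_c = M⁻¹ ∑_m t_{c,m}`. -/
theorem io_rows_have_equal_weights {A M : ℕ} {C : Type} [Fintype C]
    (hM : 0 < M)
    (w : C → Fin M → Fin A → ℂ)
    (K : C → Matrix (Fin M) (Fin A) ℂ)
    (hK : ∀ c m a, K c m a = star (w c m a))
    (hKraus : ∑ c, (K c)ᴴ * K c = (1 : Matrix (Fin A) (Fin A) ℂ))
    -- incoherent (IO) Kraus operators: each column has at most one nonzero entry,
    -- i.e. `K|a⟩ ∝ |g(a)⟩` for a function `g`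
    (hIO : ∀ c, ∃ g : Fin A → Fin M, ∀ a m, m ≠ g a → w c m a = 0)
    (V : Submodule ℂ (Fin A → ℂ))
    (P : Matrix (Fin A) (Fin A) ℂ)
    (hPH : P.IsHermitian) (hPP : P * P = P)
    (hPV : ∀ v : Fin A → ℂ, v ∈ V ↔ P.mulVec v = v)
    (Ψ : Fin M → ℂ) (hΨ : ∀ m, Ψ m = ((Real.sqrt M : ℂ))⁻¹)
    -- the channel (given by the Kraus operators) maps `V` exactly to `Ψ_M`
    (hV : ∀ v : Fin A → ℂ, v ∈ V →
      (∑ c, K c * Matrix.vecMulVec v (star v) * (K c)ᴴ) =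
        (∑ a, star (v a) * v a) • Matrix.vecMulVec Ψ (star Ψ))
    -- the target effect `∑_c |w_c^Ψ⟩⟨w_c^Ψ|` equals the projection onto `V`
    (hT : (∑ c, Matrix.vecMulVec (fun a => ∑ m, Ψ m * w c m a)
        (star (fun a => ∑ m, Ψ m * w c m a))) = P) :
    ∀ c m, (∑ a, star (w c m a) * w c m a) =
      (M : ℂ)⁻¹ * ∑ m', ∑ a, star (w c m' a) * w c m' a := by
  set wc : C → Fin A → ℂ := fun c a => ∑ m, Ψ m * w c m a with hwc
  -- Step A: each wc c lies in V
  have hQT : ∀ y : Fin A → ℂ, P.mulVec y = 0 → ∀ c', star (wc c') ⬝ᵥ y = 0 := by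
    intro y hy
    have h1 := congrArg (fun Q : Matrix (Fin A) (Fin A) ℂ => star y ⬝ᵥ Q.mulVec y) hT
    simp only [hy, dotProduct_zero] at h1
    rw [aux_qf_sum] at h1
    simp only [aux_qf] at h1
    exact aux_sum_sq_zero _ h1
  have hproj : ∀ c, P.mulVec (wc c) = wc c := by
    intro c
    set x : Fin A → ℂ := wc c - P.mulVec (wc c) with hx
    have hx0 : P.mulVec x = 0 := by
      rw [hx, Matrix.mulVec_sub, Matrix.mulVec_mulVec, hPP, sub_self]
    have h2 : star (wc c) ⬝ᵥ x = 0 := hQT x hx0 c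
    have h3 : star (P.mulVec (wc c)) ⬝ᵥ x = 0 := by
      rw [Matrix.star_mulVec, hPH.eq, ← Matrix.dotProduct_mulVec, hx0, dotProduct_zero]
    have h4 : ∑ a, star (x a) * x a = 0 := by
      have hs : star x ⬝ᵥ x = 0 := by
        have hst : star x = star (wc c) - star (P.mulVec (wc c)) := by
          rw [hx]; ext a; simp [sub_eq_add_neg]
        rw [hst, sub_dotProduct, h2, h3, sub_self]
      simpa [dotProduct] using hs
    have hx00 : x = 0 := funext (aux_sum_sq_zero x h4)
    rw [hx] at hx00
    exact (sub_eq_zero.mp hx00).symm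
  intro c m
  have hmem : wc c ∈ V := (hPV _).mpr (hproj c)
  -- Step B: all entries of (K c).mulVec (wc c) are equal
  set uc : Fin M → ℂ := (K c).mulVec (wc c) with huc
  have hB : ∀ m₀ m₁ : Fin M, uc m₀ = uc m₁ := by
    intro m₀ m₁
    set y : Fin M → ℂ := fun m => (if m = m₀ then 1 else 0) - (if m = m₁ then 1 else 0) with hy
    have hΨy : star Ψ ⬝ᵥ y = 0 := by
      simp only [dotProduct, hy, hΨ, Pi.star_apply, mul_sub, Finset.sum_sub_distrib,
        mul_ite, mul_one, mul_zero]
      simp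
    have h5 := congrArg (fun Q : Matrix (Fin M) (Fin M) ℂ => star y ⬝ᵥ Q.mulVec y)
      (hV (wc c) hmem)
    simp only [aux_sand] at h5
    rw [aux_qf_sum] at h5
    simp only [aux_qf, Matrix.smul_mulVec, dotProduct_smul, smul_eq_mul] at h5
    rw [hΨy, star_zero, zero_mul, mul_zero] at h5
    have hz := aux_sum_sq_zero _ h5 c
    have hz' : star (uc m₀) - star (uc m₁) = 0 := by
      have hd : star uc ⬝ᵥ y = star (uc m₀) - star (uc m₁) := by
        simp [dotProduct, hy, mul_sub, Finset.sum_sub_distrib, mul_ite, mul_one, mul_zero]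
      rw [← hd]; exact hz
    exact star_injective (sub_eq_zero.mp hz')
  -- Step C: uc m = Ψ m * t m
  have hC : ∀ m : Fin M, uc m = Ψ m * ∑ a, star (w c m a) * w c m a := by
    intro m'
    obtain ⟨g, hg⟩ := hIO c
    rw [huc]
    simp only [Matrix.mulVec, dotProduct, hwc, hK, Finset.mul_sum]
    apply Finset.sum_congr rfl; intro a _
    rw [Finset.sum_eq_single m']
    · ring
    · intro m'' _ hm''
      rcases eq_or_ne m' (g a) with h | h
      · rw [hg a m'' (h ▸ hm''), mul_zero, mul_zero]
      · rw [hg a m' h]; simp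
    · intro h; exact absurd (Finset.mem_univ m') h
  -- conclude
  have hΨne : ∀ m : Fin M, Ψ m ≠ 0 := by
    intro m'
    rw [hΨ]
    have hpos : (0:ℝ) < Real.sqrt M := Real.sqrt_pos.mpr (by exact_mod_cast hM)
    simp only [ne_eq, inv_eq_zero]
    exact_mod_cast hpos.ne'
  have hconst : ∀ m' : Fin M, (∑ a, star (w c m' a) * w c m' a)
      = ∑ a, star (w c m a) * w c m a := by
    intro m'
    have h6 : Ψ m' * ∑ a, star (w c m' a) * w c m' a
        = Ψ m' * ∑ a, star (w c m a) * w c m a := by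
      rw [← hC m', hB m' m, hC m, hΨ m, hΨ m']
    exact mul_left_cancel₀ (hΨne m') h6
  have hsum : ∑ m', ∑ a, star (w c m' a) * w c m' a
      = (M : ℂ) * ∑ a, star (w c m a) * w c m a := by
    rw [Finset.sum_congr rfl (fun m' _ => hconst m')]
    simp [Finset.sum_const, Finset.card_univ, nsmul_eq_mul]
  rw [hsum, ← mul_assoc, inv_mul_cancel₀ (by exact_mod_cast hM.ne' : (M:ℂ) ≠ 0), one_mul]
end

section
/- Suppose a sequence of effects T_n on (ℂ^A)^{⊗n} satisfies M_n · P_m T_n P_m ≤ P_m for every block m of a partition {I_m}_{m∈[M_n]} of the incoherent basis labels into M_n disjoint subalphabets (P_m the projection onto span{|a⟩ : a ∈ I_m}). If T_n = Σ_c |w_c⟩⟨w_c| is any decomposition into (unnormalized) pure components, then the operators K_c := √M_n Σ_m |m⟩⟨w_c| P_m satisfy Σ_c K_c† K_c = M_n Σ_m P_m T_n P_m ≤ 1, so that F(X) := Σ_c K_c X K_c† is a valid subchannel (completely positive, trace non-increasing); moreover each K_c is an incoherent (IO) Kraus operator. -/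
/-!
`K_c† K_c` is `M` times the pinching of `|w_c⟩⟨w_c|` along the partition (the part of the matrix
supported on pairs of labels in the same block), and pinching is additive, so summing over `c`
gives `M` times the pinching of `T`, which is `M ∑_m P_m T P_m`. Since `∑_m P_m = 1`, the
defect `1 - M ∑_m P_m T P_m = ∑_m (P_m - M P_m T P_m)` is a sum of positive semidefinite blocks.
-/

open Matrix BigOperators ComplexOrder

namespace Matrix

variable {ι μ R : Type*} [DecidableEq μ]

def fiberProj [DecidableEq ι] [Zero R] [One R] (g : ι → μ) (m : μ) : Matrix ι ι R :=
  diagonal fun a => if g a = m then 1 else 0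

def pinching [Zero R] (g : ι → μ) (T : Matrix ι ι R) : Matrix ι ι R :=
  of fun a b => if g a = g b then T a b else 0

@[simp]
theorem pinching_apply [Zero R] (g : ι → μ) (T : Matrix ι ι R) (a b : ι) :
    pinching g T a b = if g a = g b then T a b else 0 :=
  rfl

theorem pinching_sum [AddCommMonoid R] {C : Type*} (s : Finset C) (g : ι → μ)
    (T : C → Matrix ι ι R) : pinching g (∑ c ∈ s, T c) = ∑ c ∈ s, pinching g (T c) := by
  ext a b
  simp only [pinching_apply, sum_apply]
  split_ifs <;> simp

theorem sum_fiberProj [Fintype μ] [DecidableEq ι] [Semiring R] (g : ι → μ) :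
    ∑ m, fiberProj g m = (1 : Matrix ι ι R) := by
  ext a b
  by_cases hab : a = b <;> simp [fiberProj, hab, one_apply, sum_apply]

theorem sum_fiberProj_mul_mul_fiberProj [Fintype ι] [Fintype μ] [DecidableEq ι] [Semiring R]
    (g : ι → μ) (T : Matrix ι ι R) :
    ∑ m, fiberProj g m * T * fiberProj g m = pinching g T := by
  ext a b
  simp only [fiberProj, sum_apply, mul_diagonal, diagonal_mul, pinching_apply, mul_ite,
    ite_mul, one_mul, mul_one, zero_mul, mul_zero]
  split_ifs with h <;> simp [h, eq_comm]

/-- The operator `∑ m, |m⟩⟨v| P_m`. -/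
def fiberBra [Star R] [Zero R] (g : ι → μ) (v : ι → R) : Matrix μ ι R :=
  of fun m a => if g a = m then star (v a) else 0

theorem conjTranspose_fiberBra_mul_self [Fintype μ] [Semiring R] [StarRing R] (g : ι → μ)
    (v : ι → R) :
    (fiberBra g v)ᴴ * fiberBra g v = pinching g (vecMulVec v (star v)) := by
  ext a b
  simp only [fiberBra, mul_apply, conjTranspose_apply, of_apply, apply_ite star, star_star,
    star_zero, ite_mul, mul_ite, zero_mul, mul_zero, Finset.sum_ite_eq,
    Finset.mem_univ, if_true, pinching_apply, vecMulVec_apply, Pi.star_apply]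

end Matrix

theorem partition_pure_decomposition_gives_io_subchannel_general
    {A n Mn : ℕ} {C : Type} [Fintype C]
    (g : (Fin n → Fin A) → Fin Mn)
    (P : Fin Mn → Matrix (Fin n → Fin A) (Fin n → Fin A) ℂ)
    (hP : ∀ m, P m = Matrix.diagonal (fun a => if g a = m then 1 else 0))
    (T : Matrix (Fin n → Fin A) (Fin n → Fin A) ℂ)
    (hblock : ∀ m, (P m - (Mn : ℂ) • (P m * T * P m)).PosSemidef)
    (w : C → (Fin n → Fin A) → ℂ)
    (hT : T = ∑ c, Matrix.vecMulVec (w c) (star (w c)))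
    (K : C → Matrix (Fin Mn) (Fin n → Fin A) ℂ)
    (hK : ∀ c m a, K c m a =
      (Real.sqrt Mn : ℂ) * star (w c a) * (if g a = m then 1 else 0)) :
    (∑ c, (K c)ᴴ * K c) = (Mn : ℂ) • ∑ m, P m * T * P m ∧
    ((1 : Matrix (Fin n → Fin A) (Fin n → Fin A) ℂ) - ∑ c, (K c)ᴴ * K c).PosSemidef ∧
    (∀ c a m, m ≠ g a → K c m a = 0) := by
  obtain rfl : P = fiberProj g := funext hP
  have hKc : ∀ c, K c = (Real.sqrt Mn : ℂ) • fiberBra g (w c) := fun c => by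
    ext m a
    simp [hK, fiberBra]
  have hsqrt : star (Real.sqrt Mn : ℂ) * Real.sqrt Mn = Mn := by
    rw [Complex.star_def, Complex.conj_ofReal, ← Complex.ofReal_mul,
      Real.mul_self_sqrt (Nat.cast_nonneg _), Complex.ofReal_natCast]
  have hsum : (∑ c, (K c)ᴴ * K c) = (Mn : ℂ) • ∑ m, fiberProj g m * T * fiberProj g m :=
    calc ∑ c, (K c)ᴴ * K c = ∑ c, (Mn : ℂ) • pinching g (vecMulVec (w c) (star (w c))) := by
          refine Finset.sum_congr rfl fun c _ => ?_
          rw [hKc, conjTranspose_smul, smul_mul, Matrix.mul_smul, smul_smul, hsqrt,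
            conjTranspose_fiberBra_mul_self]
      _ = (Mn : ℂ) • ∑ m, fiberProj g m * T * fiberProj g m := by
          rw [← Finset.smul_sum, ← pinching_sum, ← hT, sum_fiberProj_mul_mul_fiberProj]
  refine ⟨hsum, ?_, fun c a m hm => by rw [hK, if_neg (Ne.symm hm), mul_zero]⟩
  rw [hsum, ← sum_fiberProj g, Finset.smul_sum, ← Finset.sum_sub_distrib]
  exact posSemidef_sum _ fun m _ => hblock m

/-- given an effect `T` on `(ℂ^A)^{⊗n}` satisfying
`M · P_m T P_m ≤ P_m` for every block `m` of a partition of the incoherent basis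
labels (given as the fibers of `g`), any pure decomposition `T = ∑_c |w_c⟩⟨w_c|`
yields operators `K_c = √M ∑_m |m⟩⟨w_c| P_m` with
`∑_c K_c† K_c = M ∑_m P_m T P_m ≤ 1` (so they define a valid subchannel), and
each `K_c` is an incoherent (IO) Kraus operator. -/
theorem partition_pure_decomposition_gives_io_subchannel
    {A n Mn : ℕ} {C : Type} [Fintype C]
    (g : (Fin n → Fin A) → Fin Mn)
    (P : Fin Mn → Matrix (Fin n → Fin A) (Fin n → Fin A) ℂ)
    (hP : ∀ m, P m = Matrix.diagonal (fun a => if g a = m then 1 else 0))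
    (T : Matrix (Fin n → Fin A) (Fin n → Fin A) ℂ)
    (hTpsd : T.PosSemidef)
    (hTle1 : ((1 : Matrix (Fin n → Fin A) (Fin n → Fin A) ℂ) - T).PosSemidef)
    (hblock : ∀ m, (P m - (Mn : ℂ) • (P m * T * P m)).PosSemidef)
    (w : C → (Fin n → Fin A) → ℂ)
    (hT : T = ∑ c, Matrix.vecMulVec (w c) (star (w c)))
    (K : C → Matrix (Fin Mn) (Fin n → Fin A) ℂ)
    (hK : ∀ c m a, K c m a =
      (Real.sqrt Mn : ℂ) * star (w c a) * (if g a = m then 1 else 0)) :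
    (∑ c, (K c)ᴴ * K c) = (Mn : ℂ) • ∑ m, P m * T * P m ∧
    ((1 : Matrix (Fin n → Fin A) (Fin n → Fin A) ℂ) - ∑ c, (K c)ᴴ * K c).PosSemidef ∧
    (∀ c a m, m ≠ g a → K c m a = 0) :=
  partition_pure_decomposition_gives_io_subchannel_general g P hP T hblock w hT K hK
end
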